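/- arXiv:1612.06900 — 2 statements merged into one kernel-verified Lean document; each statement's English description precedes it below -/
import Mathlib

section
/- For arbitrary compound random sequences {X_{sn}} and {Y_{sn}} on the same probability spaces, oln{X} + uuline{Y} ≤ oln{X+Y}, where uuline{Y} = sup{y : lim_n sup_s P(Y_{sn} ≤ y) = 0}. (Assume the relevant quantities are finite.) -/
/-!
For each state, the union bound gives `P(X ≥ z - y) ≤ P(X + Y ≥ z) + P(Y ≤ y)`. Bounding the last
term by its supremum over `s` and then taking `inf_s`, the limits `0` for `X + Y` at level `z`
and, uniformly in `s`, for `Y` at level `y` yield the limit `0` for `X` at level `z - y`.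
Hence `olnOp μ X + y ≤ z` for all such `y` and `z`; take the supremum in `y` and the infimum in `z`.
-/

open MeasureTheory Filter Topology

noncomputable section

variable {S Ω : Type*} [MeasurableSpace Ω]

/-- Compound infimum: `sup {x : lim_n sup_s P(X_{sn} ≤ x) = 0}` (conventions: `sup ∅ = ⊥`). -/
def uulineOp (μ : Measure Ω) (X : S → ℕ → Ω → ℝ) : EReal :=
  sSup (Real.toEReal '' {x : ℝ |
    Tendsto (fun n => ⨆ s, μ {ω | X s n ω ≤ x}) atTop (𝓝 0)})

/-- Compound supremum: `inf {x : lim_n sup_s P(X_{sn} ≥ x) = 0}` (conventions: `inf ∅ = ⊤`). -/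
def oolineOp (μ : Measure Ω) (X : S → ℕ → Ω → ℝ) : EReal :=
  sInf (Real.toEReal '' {x : ℝ |
    Tendsto (fun n => ⨆ s, μ {ω | x ≤ X s n ω}) atTop (𝓝 0)})

/-- Mixed compound infimum: `sup {x : lim_n inf_s P(X_{sn} ≤ x) = 0}`. -/
def ulnOp (μ : Measure Ω) (X : S → ℕ → Ω → ℝ) : EReal :=
  sSup (Real.toEReal '' {x : ℝ |
    Tendsto (fun n => ⨅ s, μ {ω | X s n ω ≤ x}) atTop (𝓝 0)})

/-- Mixed compound supremum: `inf {x : lim_n inf_s P(X_{sn} ≥ x) = 0}`. -/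
def olnOp (μ : Measure Ω) (X : S → ℕ → Ω → ℝ) : EReal :=
  sInf (Real.toEReal '' {x : ℝ |
    Tendsto (fun n => ⨅ s, μ {ω | x ≤ X s n ω}) atTop (𝓝 0)})

/-- Per-state infimum: `sup {x : lim_n P(X_{sn} ≤ x) = 0}`. -/
def ulnStateOp (μ : Measure Ω) (X : S → ℕ → Ω → ℝ) (s : S) : EReal :=
  sSup (Real.toEReal '' {x : ℝ |
    Tendsto (fun n => μ {ω | X s n ω ≤ x}) atTop (𝓝 0)})

/-- Per-state supremum: `inf {x : lim_n P(X_{sn} ≥ x) = 0}`. -/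
def olnStateOp (μ : Measure Ω) (X : S → ℕ → Ω → ℝ) (s : S) : EReal :=
  sInf (Real.toEReal '' {x : ℝ |
    Tendsto (fun n => μ {ω | x ≤ X s n ω}) atTop (𝓝 0)})

/-- Per-state sup-entropy rate (strict tail): `inf {R : lim_n P(h_{sn} > R) = 0}`. -/
def HbarOp (μ : Measure Ω) (h : S → ℕ → Ω → ℝ) (s : S) : EReal :=
  sInf (Real.toEReal '' {R : ℝ |
    Tendsto (fun n => μ {ω | R < h s n ω}) atTop (𝓝 0)})

end

section

variable {S Ω : Type*} [MeasurableSpace Ω] (μ : Measure Ω)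

lemma measure_sub_le_le_add (f g : Ω → ℝ) (y z : ℝ) :
    μ {ω | z - y ≤ f ω} ≤ μ {ω | z ≤ f ω + g ω} + μ {ω | g ω ≤ y} := by
  have hsub : {ω | z - y ≤ f ω} ⊆ {ω | z ≤ f ω + g ω} ∪ {ω | g ω ≤ y} := by
    intro ω hω
    by_cases hg : g ω ≤ y
    · exact Or.inr hg
    · have hf : z - y ≤ f ω := hω
      exact Or.inl (show z ≤ f ω + g ω by linarith)
  exact (measure_mono hsub).trans (measure_union_le _ _)

lemma tendsto_iInf_measure_sub_le (X Y : S → ℕ → Ω → ℝ) {y z : ℝ}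
    (hz : Tendsto (fun n => ⨅ s, μ {ω | z ≤ X s n ω + Y s n ω}) atTop (𝓝 0))
    (hy : Tendsto (fun n => ⨆ s, μ {ω | Y s n ω ≤ y}) atTop (𝓝 0)) :
    Tendsto (fun n => ⨅ s, μ {ω | z - y ≤ X s n ω}) atTop (𝓝 0) := by
  have hbound : ∀ n, ⨅ s, μ {ω | z - y ≤ X s n ω} ≤
      (⨅ s, μ {ω | z ≤ X s n ω + Y s n ω}) + ⨆ s, μ {ω | Y s n ω ≤ y} := fun n =>
    calc ⨅ s, μ {ω | z - y ≤ X s n ω}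
        ≤ ⨅ s, (μ {ω | z ≤ X s n ω + Y s n ω} + ⨆ s', μ {ω | Y s' n ω ≤ y}) :=
          iInf_mono fun s => (measure_sub_le_le_add μ _ _ y z).trans <|
            add_le_add_right (le_iSup (fun s' => μ {ω | Y s' n ω ≤ y}) s) _
      _ = (⨅ s, μ {ω | z ≤ X s n ω + Y s n ω}) + ⨆ s, μ {ω | Y s n ω ≤ y} :=
          ENNReal.iInf_add.symm
  have hsum := hz.add hy
  rw [add_zero] at hsum
  exact tendsto_of_tendsto_of_tendsto_of_le_of_le tendsto_const_nhds hsum (fun _ => zero_le)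
    hbound

end

theorem stmt3_general {S Ω : Type*} [MeasurableSpace Ω]
    (μ : MeasureTheory.Measure Ω)
    (X Y : S → ℕ → Ω → ℝ) :
    olnOp μ X + uulineOp μ Y ≤ olnOp μ (fun s n ω => X s n ω + Y s n ω) := by
  refine le_sInf ?_
  rintro _ ⟨z, hz, rfl⟩
  refine EReal.add_le_of_forall_lt fun a ha b hb => ?_
  obtain ⟨_, ⟨y, hy, rfl⟩, hby⟩ := lt_sSup_iff.1 hb
  have hX : olnOp μ X ≤ ((z - y : ℝ) : EReal) :=
    sInf_le ⟨z - y, tendsto_iInf_measure_sub_le μ X Y hz hy, rfl⟩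
  calc a + b ≤ ((z - y : ℝ) : EReal) + y := add_le_add (ha.trans_le hX).le hby.le
    _ = z := by rw [← EReal.coe_add, sub_add_cancel]

theorem stmt3 {S Ω : Type*} [MeasurableSpace Ω]
    (μ : MeasureTheory.Measure Ω) [MeasureTheory.IsProbabilityMeasure μ]
    (X Y : S → ℕ → Ω → ℝ)
    (hX_bot : olnOp μ X ≠ ⊥) (hX_top : olnOp μ X ≠ ⊤)
    (hY_bot : uulineOp μ Y ≠ ⊥) (hY_top : uulineOp μ Y ≠ ⊤) :
    olnOp μ X + uulineOp μ Y ≤ olnOp μ (fun s n ω => X s n ω + Y s n ω) :=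
  stmt3_general μ X Y
end

section
/- If the compound random sequence {Y_{sn}} converges in probability uniformly in s to a constant y₀ (i.e., lim_n sup_s P(|Y_{sn} - y₀| > ε) = 0 for every ε > 0), then for any compound sequence {X_{sn}} on the same probability spaces with oln{X} finite, oln{X+Y} = oln{X} + y₀, where oln{Z} = inf{x : lim_n inf_s P(Z_{sn} ≥ x) = 0}. -/
/-! If `x + y₀ + ε ≤ X + Y` then either `x ≤ X` or `|Y - y₀| > ε`, so
`inf_s P(X + Y ≥ x + y₀ + ε) ≤ inf_s P(X ≥ x) + sup_s P(|Y - y₀| > ε)`; taking `x` just above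
`oln{X}` and letting `ε → 0` gives `oln{X + Y} ≤ oln{X} + y₀`. The reverse inequality is the same
bound applied to `X + Y` and `-Y`, which converges uniformly in probability to `-y₀`. -/

open MeasureTheory Filter Topology

namespace CompoundSequence

theorem setOf_add_le_subset {Ω : Type*} (X Y : Ω → ℝ) (x y₀ ε : ℝ) :
    {ω | x + y₀ + ε ≤ X ω + Y ω} ⊆ {ω | x ≤ X ω} ∪ {ω | ε < |Y ω - y₀|} := by
  intro ω hω
  by_contra! h
  simp only [Set.mem_union, Set.mem_ofPred_eq, not_or, not_le, not_lt] at hω h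
  linarith [le_abs_self (Y ω - y₀)]

variable {S Ω : Type*} [MeasurableSpace Ω] (μ : Measure Ω)

def TendstoInMeasureUniformly (Y : S → ℕ → Ω → ℝ) (y₀ : ℝ) : Prop :=
  ∀ ε > (0 : ℝ), Tendsto (fun n => ⨆ s, μ {ω | ε < |Y s n ω - y₀|}) atTop (𝓝 0)

variable {μ}

theorem TendstoInMeasureUniformly.neg {Y : S → ℕ → Ω → ℝ} {y₀ : ℝ}
    (hY : TendstoInMeasureUniformly μ Y y₀) : TendstoInMeasureUniformly μ (-Y) (-y₀) := by
  intro ε hε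
  simpa only [Pi.neg_apply, ← neg_add', abs_neg, ← sub_eq_add_neg] using hY ε hε

theorem iInf_measure_add_le (X Y : S → ℕ → Ω → ℝ) (x y₀ ε : ℝ) (n : ℕ) :
    ⨅ s, μ {ω | x + y₀ + ε ≤ X s n ω + Y s n ω} ≤
      (⨅ s, μ {ω | x ≤ X s n ω}) + ⨆ s, μ {ω | ε < |Y s n ω - y₀|} := by
  rw [ENNReal.iInf_add]
  refine iInf_mono fun s => ?_
  calc μ {ω | x + y₀ + ε ≤ X s n ω + Y s n ω}
      ≤ μ {ω | x ≤ X s n ω} + μ {ω | ε < |Y s n ω - y₀|} :=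
        (measure_mono (setOf_add_le_subset _ _ x y₀ ε)).trans (measure_union_le _ _)
    _ ≤ μ {ω | x ≤ X s n ω} + ⨆ s, μ {ω | ε < |Y s n ω - y₀|} := by
        gcongr
        exact le_iSup (fun s => μ {ω | ε < |Y s n ω - y₀|}) s

theorem tendsto_iInf_measure_add {X Y : S → ℕ → Ω → ℝ} {x y₀ ε : ℝ}
    (hY : Tendsto (fun n => ⨆ s, μ {ω | ε < |Y s n ω - y₀|}) atTop (𝓝 0))
    (hx : Tendsto (fun n => ⨅ s, μ {ω | x ≤ X s n ω}) atTop (𝓝 0)) :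
    Tendsto (fun n => ⨅ s, μ {ω | x + y₀ + ε ≤ X s n ω + Y s n ω}) atTop (𝓝 0) := by
  have hsum := hx.add hY
  rw [add_zero] at hsum
  exact tendsto_of_tendsto_of_tendsto_of_le_of_le tendsto_const_nhds hsum
    (fun _ => zero_le) (iInf_measure_add_le X Y x y₀ ε)

theorem olnOp_add_le {X Y : S → ℕ → Ω → ℝ} {y₀ : ℝ} (hY : TendstoInMeasureUniformly μ Y y₀) :
    olnOp μ (X + Y) ≤ olnOp μ X + y₀ := by
  refine le_of_forall_gt_imp_ge_of_dense fun w hw => ?_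
  obtain ⟨r, hXr, hrw⟩ := EReal.exists_between_coe_real hw
  have hXr' : olnOp μ X < ((r - y₀ : ℝ) : EReal) := by
    rw [EReal.coe_sub]
    exact (EReal.lt_sub_iff_add_lt (.inl (EReal.coe_ne_bot _)) (.inl (EReal.coe_ne_top _))).2 hXr
  obtain ⟨_, ⟨x, hx, rfl⟩, hxr⟩ := sInf_lt_iff.mp hXr'
  have hε : 0 < r - (x + y₀) := by linarith [EReal.coe_lt_coe_iff.mp hxr]
  have hr : Tendsto (fun n => ⨅ s, μ {ω | r ≤ (X + Y) s n ω}) atTop (𝓝 0) := by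
    simpa only [Pi.add_apply, add_sub_cancel] using tendsto_iInf_measure_add (hY _ hε) hx
  exact (sInf_le (Set.mem_image_of_mem _ hr)).trans hrw.le

end CompoundSequence

theorem stmt9_general {S Ω : Type*} [MeasurableSpace Ω]
    (μ : MeasureTheory.Measure Ω)
    (X Y : S → ℕ → Ω → ℝ) (y₀ : ℝ)
    (hY : ∀ ε > (0 : ℝ),
      Filter.Tendsto (fun n => ⨆ s, μ {ω | ε < |Y s n ω - y₀|})
        Filter.atTop (nhds 0)) :
    olnOp μ (fun s n ω => X s n ω + Y s n ω) = olnOp μ X + (y₀ : EReal) := by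
  have hY : CompoundSequence.TendstoInMeasureUniformly μ Y y₀ := hY
  refine le_antisymm (CompoundSequence.olnOp_add_le hY) (EReal.add_le_of_le_sub ?_)
  have h := CompoundSequence.olnOp_add_le (X := X + Y) hY.neg
  rwa [add_neg_cancel_right, EReal.coe_neg, ← sub_eq_add_neg] at h

theorem stmt9 {S Ω : Type*} [MeasurableSpace Ω]
    (μ : MeasureTheory.Measure Ω) [MeasureTheory.IsProbabilityMeasure μ]
    (X Y : S → ℕ → Ω → ℝ) (y₀ : ℝ)
    (hY : ∀ ε > (0 : ℝ),
      Filter.Tendsto (fun n => ⨆ s, μ {ω | ε < |Y s n ω - y₀|})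
        Filter.atTop (nhds 0))
    (hX_fin : ∃ c : ℝ, olnOp μ X = (c : EReal)) :
    olnOp μ (fun s n ω => X s n ω + Y s n ω) = olnOp μ X + (y₀ : EReal) :=
  stmt9_general μ X Y y₀ hY
end
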